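/- arXiv:1409.2077 — 6 statements merged into one kernel-verified Lean document; each statement's English description precedes it below -/
import Mathlib

section
/- Let S be a finite commutative semigroup. Then D(S) = d(S) + 1, where D(S) is the (large) Davenport constant and d(S) is the small Davenport constant of S. -/
/-- The product of a sequence (finite multiset) over a commutative semigroup, computed in
the monoid `WithOne S` obtained by adjoining an identity (the empty product is `1`). -/
def sgProd {S : Type*} [CommSemigroup S] (T : Multiset S) : WithOne S :=
  (T.map (fun s => (s : WithOne S))).prod

/-- `σ(T') = σ(T)` for sequences over a commutative semigroup, with the convention that
the sum of the empty sequence is the identity element of `S` when `S` has one. -/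
def SgProdEq {S : Type*} [CommSemigroup S] (T' T : Multiset S) : Prop :=
  sgProd T' = sgProd T ∨
    (T' = 0 ∧ ∃ e : S, (∀ s : S, e * s = s) ∧ sgProd T = (e : WithOne S))

/-- A sequence `T` over a commutative semigroup is reducible if it has a proper
subsequence `T'` (possibly empty when `S` has an identity) with `σ(T') = σ(T)`. -/
def SgReducible {S : Type*} [CommSemigroup S] (T : Multiset S) : Prop :=
  ∃ T' : Multiset S, T' ≤ T ∧ T' ≠ T ∧ SgProdEq T' T

/-- The (large) Davenport constant `D(S)` of a commutative semigroup: the least positive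
integer `ℓ` such that every sequence over `S` of length at least `ℓ` is reducible. -/
noncomputable def DavenportSg (S : Type*) [CommSemigroup S] : ℕ :=
  sInf {n : ℕ | 1 ≤ n ∧ ∀ T : Multiset S, n ≤ Multiset.card T → SgReducible T}

/-- The small Davenport constant `d(S)`: the least `ℓ ∈ ℕ₀` such that for every `m` and
all `a₁, …, a_m ∈ S` there is `I ⊆ [1, m]` with `|I| ≤ ℓ` and `∏_{i=1}^m a_i = ∏_{i∈I} a_i`
(an empty `I` being allowed when `S` has an identity, with the empty product convention). -/
noncomputable def smallDavenportSg (S : Type*) [CommSemigroup S] : ℕ :=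
  sInf {ℓ : ℕ | ∀ (m : ℕ) (a : Fin m → S), ∃ I : Finset (Fin m), I.card ≤ ℓ ∧
    ((∏ i ∈ I, ((a i : WithOne S))) = ∏ i, ((a i : WithOne S)) ∨
      (I = ∅ ∧ ∃ e : S, (∀ s : S, e * s = s) ∧
        (∏ i, ((a i : WithOne S))) = (e : WithOne S)))}

/-! Pigeonhole on the |S| + 1 nonempty prefix products shows that a sequence longer than |S|
has a proper subsequence with the same product, so both constants are finite. If every
sequence has a subsequence of length at most `ℓ` with the same product, then every sequence of
length `ℓ + 1` is reducible; conversely, if every sequence of length at least `n` is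
reducible, a shortest subsequence with the same product as a given sequence has length
less than `n`. -/

theorem Multiset.exists_le_map_eq_of_le_map {α β : Type*} {f : α → β} {s : Multiset α}
    {u : Multiset β} (h : u ≤ s.map f) : ∃ t ≤ s, t.map f = u := by
  induction s using Quotient.inductionOn with | h l =>
  induction u using Quotient.inductionOn with | h l' =>
  obtain ⟨l'', hperm, hsub⟩ := Multiset.coe_le.1 h
  obtain ⟨l₀, hl₀, rfl⟩ := List.sublist_map_iff.1 hsub
  exact ⟨l₀, Multiset.coe_le.2 hl₀.subperm, Multiset.coe_eq_coe.2 hperm⟩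

theorem Multiset.exists_fin_univ_map_eq {α : Type*} (T : Multiset α) :
    ∃ (m : ℕ) (a : Fin m → α), Finset.univ.val.map a = T :=
  ⟨_, T.toList.get, by rw [Fin.univ_val_map, List.ofFn_get, Multiset.coe_toList]⟩

section Davenport

variable {S : Type*} [CommSemigroup S]

def IsDavenportBound (S : Type*) [CommSemigroup S] (n : ℕ) : Prop :=
  ∀ T : Multiset S, n ≤ Multiset.card T → SgReducible T

def IsSmallDavenportBound (S : Type*) [CommSemigroup S] (ℓ : ℕ) : Prop :=
  ∀ T : Multiset S, ∃ T' ≤ T, Multiset.card T' ≤ ℓ ∧ SgProdEq T' T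

-- The coercion in `sgProd` elaborates through the multiset monad, so unfolding it is unhelpful.
theorem sgProd_eq_prod_map (T : Multiset S) : sgProd T = (T.map ((↑) : S → WithOne S)).prod := by
  simp [sgProd]

theorem sgProd_zero : sgProd (0 : Multiset S) = 1 := by
  simp [sgProd]

theorem sgProd_add (T₁ T₂ : Multiset S) : sgProd (T₁ + T₂) = sgProd T₁ * sgProd T₂ := by
  simp [sgProd]

theorem exists_sgProd_eq_coe {T : Multiset S} (hT : T ≠ 0) : ∃ s : S, sgProd T = s := by
  induction T using Multiset.induction_on with
  | empty => exact absurd rfl hT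
  | cons a T ih =>
    rcases eq_or_ne T 0 with rfl | hT
    · exact ⟨a, by simp [sgProd]⟩
    · obtain ⟨s, hs⟩ := ih hT
      refine ⟨a * s, ?_⟩
      rw [sgProd_eq_prod_map] at hs ⊢
      rw [Multiset.map_cons, Multiset.prod_cons, hs, WithOne.coe_mul]

theorem sgProd_eq_one_iff {T : Multiset S} : sgProd T = 1 ↔ T = 0 := by
  refine ⟨fun h => by_contra fun hT => ?_, fun h => h ▸ sgProd_zero⟩
  obtain ⟨s, hs⟩ := exists_sgProd_eq_coe hT
  exact WithOne.coe_ne_one (hs.symm.trans h)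

theorem sgProd_map_val {ι : Type*} (I : Finset ι) (a : ι → S) :
    sgProd (I.val.map a) = ∏ i ∈ I, (a i : WithOne S) := by
  rw [sgProd_eq_prod_map, Multiset.map_map]
  rfl

theorem SgProdEq.refl (T : Multiset S) : SgProdEq T T :=
  Or.inl rfl

theorem SgProdEq.trans {T₁ T₂ T₃ : Multiset S} (h₁₂ : SgProdEq T₁ T₂) (h₂₃ : SgProdEq T₂ T₃) :
    SgProdEq T₁ T₃ := by
  rcases h₁₂ with h₁₂ | ⟨rfl, e, he, h₁₂⟩ <;> rcases h₂₃ with h₂₃ | ⟨rfl, e', he', h₂₃⟩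
  · exact Or.inl (h₁₂.trans h₂₃)
  · exact Or.inr ⟨sgProd_eq_one_iff.1 (h₁₂.trans sgProd_zero), e', he', h₂₃⟩
  · exact Or.inr ⟨rfl, e, he, h₂₃.symm.trans h₁₂⟩
  · exact Or.inr ⟨rfl, e', he', h₂₃⟩

theorem sgProdEq_map_val_iff {ι : Type*} (a : ι → S) (I J : Finset ι) :
    SgProdEq (I.val.map a) (J.val.map a) ↔
      (∏ i ∈ I, (a i : WithOne S)) = ∏ i ∈ J, (a i : WithOne S) ∨
        (I = ∅ ∧ ∃ e : S, (∀ s : S, e * s = s) ∧ ∏ i ∈ J, (a i : WithOne S) = e) := by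
  simp only [SgProdEq, sgProd_map_val, Multiset.map_eq_zero, Finset.val_eq_zero]

theorem isSmallDavenportBound_iff {ℓ : ℕ} :
    IsSmallDavenportBound S ℓ ↔ ∀ (m : ℕ) (a : Fin m → S), ∃ I : Finset (Fin m), I.card ≤ ℓ ∧
      ((∏ i ∈ I, (a i : WithOne S)) = ∏ i, (a i : WithOne S) ∨
        (I = ∅ ∧ ∃ e : S, (∀ s : S, e * s = s) ∧ ∏ i, (a i : WithOne S) = e)) := by
  constructor
  · intro h m a
    obtain ⟨T', hle, hcard, hT'⟩ := h (Finset.univ.val.map a)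
    obtain ⟨t, ht, rfl⟩ := Multiset.exists_le_map_eq_of_le_map hle
    refine ⟨⟨t, Multiset.nodup_of_le ht Finset.univ.nodup⟩, ?_, ?_⟩
    · simpa using hcard
    · exact (sgProdEq_map_val_iff a _ Finset.univ).1 hT'
  · intro h T
    obtain ⟨m, a, rfl⟩ := T.exists_fin_univ_map_eq
    obtain ⟨I, hcard, hI⟩ := h m a
    refine ⟨I.val.map a, Multiset.map_le_map (Finset.val_le_iff.2 I.subset_univ), ?_, ?_⟩
    · simpa using hcard
    · exact (sgProdEq_map_val_iff a I Finset.univ).2 hI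

theorem smallDavenportSg_eq_sInf :
    smallDavenportSg S = sInf {ℓ | IsSmallDavenportBound S ℓ} := by
  simp only [smallDavenportSg, isSmallDavenportBound_iff]

theorem smallDavenportSg_le {ℓ : ℕ} (h : IsSmallDavenportBound S ℓ) : smallDavenportSg S ≤ ℓ :=
  smallDavenportSg_eq_sInf (S := S) ▸ Nat.sInf_le h

theorem exists_lt_sgProd_eq_of_take_eq {l : List S} {i j : ℕ} (hij : i < j) (hj : j ≤ l.length)
    (h : sgProd (l.take i : Multiset S) = sgProd (l.take j : Multiset S)) :
    ∃ T' < (l : Multiset S), sgProd T' = sgProd l := by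
  have hl : (l : Multiset S) = (l.take j : Multiset S) + (l.drop j : Multiset S) := by
    rw [Multiset.coe_add, List.take_append_drop]
  refine ⟨(l.take i : Multiset S) + (l.drop j : Multiset S), ?_, ?_⟩
  · rw [hl]
    refine add_lt_add_left (lt_of_le_of_ne ?_ (ne_of_apply_ne Multiset.card ?_)) _
    · exact Multiset.coe_le.2 (List.take_prefix_take_left hij.le).sublist.subperm
    · simp only [Multiset.coe_card, List.length_take]
      omega
  · rw [sgProd_add, h, ← sgProd_add, ← hl]

theorem exists_lt_sgProd_eq_of_natCard_lt [Finite S] {T : Multiset S}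
    (h : Nat.card S < Multiset.card T) : ∃ T' < T, sgProd T' = sgProd T := by
  classical
  have := Fintype.ofFinite S
  induction T using Quotient.inductionOn with | h l =>
  change Nat.card S < l.length at h
  have hmaps : ∀ k ∈ Finset.Icc 1 (Nat.card S + 1),
      sgProd (l.take k : Multiset S) ∈ (Finset.univ : Finset S).image (↑) := by
    intro k hk
    obtain ⟨s, hs⟩ := exists_sgProd_eq_coe (T := (l.take k : Multiset S)) (by
      rw [Finset.mem_Icc] at hk
      rw [Ne, Multiset.coe_eq_zero, ← List.length_eq_zero_iff, List.length_take]
      omega)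
    exact Finset.mem_image.2 ⟨s, Finset.mem_univ s, hs.symm⟩
  obtain ⟨i, hi, j, hj, hne, hij⟩ := Finset.exists_ne_map_eq_of_card_lt_of_maps_to
    (Finset.card_image_le.trans_lt (by simp [Nat.card_eq_fintype_card])) hmaps
  rw [Finset.mem_Icc] at hi hj
  rcases hne.lt_or_gt with hlt | hlt
  · exact exists_lt_sgProd_eq_of_take_eq hlt (by omega) hij
  · exact exists_lt_sgProd_eq_of_take_eq hlt (by omega) hij.symm

theorem isSmallDavenportBound_natCard [Finite S] : IsSmallDavenportBound S (Nat.card S) := by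
  intro T
  induction T using Multiset.strongInductionOn with | _ T ih =>
  by_cases hT : Multiset.card T ≤ Nat.card S
  · exact ⟨T, le_rfl, hT, SgProdEq.refl T⟩
  obtain ⟨T'', hlt, hprod⟩ := exists_lt_sgProd_eq_of_natCard_lt (not_le.1 hT)
  obtain ⟨T', hle, hcard, hT'⟩ := ih T'' hlt
  exact ⟨T', hle.trans hlt.le, hcard, hT'.trans (Or.inl hprod)⟩

theorem isSmallDavenportBound_smallDavenportSg [Finite S] :
    IsSmallDavenportBound S (smallDavenportSg S) := by
  rw [smallDavenportSg_eq_sInf]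
  exact Nat.sInf_mem (s := {ℓ | IsSmallDavenportBound S ℓ}) ⟨_, isSmallDavenportBound_natCard⟩

theorem IsSmallDavenportBound.isDavenportBound_succ {ℓ : ℕ} (h : IsSmallDavenportBound S ℓ) :
    IsDavenportBound S (ℓ + 1) := by
  intro T hT
  obtain ⟨T', hle, hcard, hT'⟩ := h T
  exact ⟨T', hle, fun h => by rw [h] at hcard; omega, hT'⟩

theorem IsDavenportBound.isSmallDavenportBound_pred {n : ℕ} (h : IsDavenportBound S n) :
    IsSmallDavenportBound S (n - 1) := by
  suffices ∀ T : Multiset S, ∃ T' ≤ T, Multiset.card T' < n ∧ SgProdEq T' T from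
    fun T => (this T).imp fun T' ⟨hle, hcard, hT'⟩ => ⟨hle, by omega, hT'⟩
  intro T
  induction T using Multiset.strongInductionOn with | _ T ih =>
  by_cases hT : Multiset.card T < n
  · exact ⟨T, le_rfl, hT, SgProdEq.refl T⟩
  obtain ⟨T'', hle, hne, hT''⟩ := h T (not_lt.1 hT)
  obtain ⟨T', hle', hcard, hT'⟩ := ih T'' (lt_of_le_of_ne hle hne)
  exact ⟨T', hle'.trans hle, hcard, hT'.trans hT''⟩

end Davenport

/-- For a finite commutative semigroup `S`, `D(S) = d(S) + 1`. -/
theorem davenport_eq_small_davenport_add_one {S : Type*} [CommSemigroup S] [Finite S] :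
    DavenportSg S = smallDavenportSg S + 1 := by
  have hd_succ : smallDavenportSg S + 1 ∈ {n | 1 ≤ n ∧ IsDavenportBound S n} :=
    ⟨Nat.succ_pos _, isSmallDavenportBound_smallDavenportSg.isDavenportBound_succ⟩
  obtain ⟨hD_pos, hD⟩ : 1 ≤ DavenportSg S ∧ IsDavenportBound S (DavenportSg S) :=
    Nat.sInf_mem ⟨_, hd_succ⟩
  have hD_le : DavenportSg S ≤ smallDavenportSg S + 1 := Nat.sInf_le hd_succ
  have hd_le : smallDavenportSg S ≤ DavenportSg S - 1 :=
    smallDavenportSg_le hD.isSmallDavenportBound_pred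
  omega
end

section
/- Let G be a finite abelian group and let K_0 ≤ K_1 ≤ ⋯ ≤ K_t be a strictly increasing chain of subgroups of G (K_{i−1} a proper subgroup of K_i for each i ∈ [1,t]) with K_0 the trivial subgroup. Then D(G/K_t) ≤ D(G) − t. -/
/-!
Let `f : A →* B` be surjective. Lifting a product-one free sequence of `B` of length
`D(B) - 1` along `f` gives a product-one free sequence of `A`, so `D(B) ≤ D(A)`. If moreover
`f h = 1` for some `h ≠ 1`, the lift stays product-one free after appending `h`: the rest of a
product-one subsequence containing `h` maps to a product-one subsequence of the original, so it
is empty. Hence `D(B) < D(A)`, and each proper step `K i < K (i + 1)` of the chain lowers the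
Davenport constant of the quotient by at least one.
-/

/-- The classical Davenport constant of a finite abelian group: the least positive
integer `ℓ` such that every sequence (finite multiset) of elements of `G` of length at
least `ℓ` has a nonempty subsequence whose product is the identity. -/
noncomputable def DavenportG (G : Type*) [CommGroup G] : ℕ :=
  sInf {n : ℕ | 1 ≤ n ∧ ∀ T : Multiset G, n ≤ Multiset.card T →
    ∃ T' : Multiset G, T' ≤ T ∧ T' ≠ 0 ∧ T'.prod = 1}

def Multiset.IsProductOneFree {M : Type*} [CommMonoid M] (T : Multiset M) : Prop :=
  ∀ S ≤ T, S ≠ 0 → S.prod ≠ 1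

namespace Multiset.IsProductOneFree

variable {M N : Type*} [CommMonoid M] [CommMonoid N] {T : Multiset M}

theorem of_map (f : M →* N) (hT : (T.map f).IsProductOneFree) : T.IsProductOneFree :=
  fun S hS hS0 hprod => hT (S.map f) (Multiset.map_le_map hS) (by simpa using hS0)
    (by rw [← map_multiset_prod, hprod, map_one])

theorem cons_of_mem_ker [DecidableEq M] (f : M →* N) (hT : (T.map f).IsProductOneFree)
    {h : M} (hker : h ∈ MonoidHom.mker f) (h1 : h ≠ 1) : (h ::ₘ T).IsProductOneFree := by
  intro S hS hS0 hprod
  have hmap_rest : f (S.erase h).prod = 1 := by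
    by_cases hhS : h ∈ S
    · calc f (S.erase h).prod = f h * f (S.erase h).prod := by
            rw [MonoidHom.mem_mker.mp hker, one_mul]
        _ = 1 := by rw [← map_mul, Multiset.prod_erase hhS, hprod, map_one]
    · rw [Multiset.erase_of_notMem hhS, hprod, map_one]
  have hrest : S.erase h = 0 := by
    by_contra hne
    exact hT _ (Multiset.map_le_map (Multiset.erase_le_iff_le_cons.mpr hS)) (by simpa using hne)
      (by rw [← map_multiset_prod, hmap_rest])
  by_cases hhS : h ∈ S
  · rw [← Multiset.prod_erase hhS, hrest, Multiset.prod_zero, mul_one] at hprod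
    exact h1 hprod
  · rw [Multiset.erase_of_notMem hhS] at hrest
    exact hS0 hrest

end Multiset.IsProductOneFree

namespace List

variable {G : Type*} [Group G]

theorem exists_sublist_prod_eq_one_of_prod_take_eq {l : List G} {i j : ℕ} (hij : i < j)
    (hj : j ≤ l.length) (hprod : (l.take i).prod = (l.take j).prod) :
    ∃ s : List G, s ≠ [] ∧ s.Sublist l ∧ s.prod = 1 := by
  refine ⟨(l.drop i).take (j - i), ?_, ((l.drop i).take_sublist _).trans (l.drop_sublist i), ?_⟩
  · rw [← List.length_pos_iff, List.length_take, List.length_drop]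
    omega
  · have htake : l.take j = l.take i ++ (l.drop i).take (j - i) := by
      rw [← List.take_add]
      congr 1
      omega
    rw [htake, List.prod_append] at hprod
    exact left_eq_mul.mp hprod

theorem exists_sublist_prod_eq_one_of_card_le [Finite G] {l : List G}
    (hl : Nat.card G ≤ l.length) : ∃ s : List G, s ≠ [] ∧ s.Sublist l ∧ s.prod = 1 := by
  have : Fintype G := Fintype.ofFinite G
  have hcard : Fintype.card G < Fintype.card (Fin (l.length + 1)) := by
    rw [Fintype.card_fin, ← Nat.card_eq_fintype_card]
    omega
  obtain ⟨i, j, hij, hprod⟩ :=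
    Fintype.exists_ne_map_eq_of_card_lt (fun i : Fin (l.length + 1) => (l.take i).prod) hcard
  rcases lt_or_gt_of_ne (Fin.val_ne_of_ne hij) with h | h
  · exact exists_sublist_prod_eq_one_of_prod_take_eq h (by omega) hprod
  · exact exists_sublist_prod_eq_one_of_prod_take_eq h (by omega) hprod.symm

end List

section Davenport

variable {G H : Type*} [CommGroup G] [CommGroup H]

theorem Multiset.IsProductOneFree.card_lt_natCard [Finite G] {T : Multiset G}
    (hT : T.IsProductOneFree) : Multiset.card T < Nat.card G := by
  by_contra! hle
  obtain ⟨s, hs, hsub, hprod⟩ :=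
    List.exists_sublist_prod_eq_one_of_card_le (l := T.toList) (by simpa using hle)
  refine hT s ?_ (by simpa using hs) (by simpa using hprod)
  simpa using (Multiset.coe_le.mpr hsub.subperm : (s : Multiset G) ≤ T.toList)

theorem davenportG_eq_sInf : DavenportG G =
    sInf {n : ℕ | 1 ≤ n ∧ ∀ T : Multiset G, T.IsProductOneFree → Multiset.card T < n} := by
  unfold DavenportG Multiset.IsProductOneFree
  congr! 4 with n
  refine forall_congr' fun T => ?_
  rw [← not_imp_not, not_le]
  push Not
  rfl

theorem davenportG_mem [Finite G] : DavenportG G ∈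
    {n : ℕ | 1 ≤ n ∧ ∀ T : Multiset G, T.IsProductOneFree → Multiset.card T < n} := by
  rw [davenportG_eq_sInf]
  exact Nat.sInf_mem ⟨Nat.card G, Nat.card_pos, fun T hT => hT.card_lt_natCard⟩

theorem Multiset.IsProductOneFree.card_lt_davenportG [Finite G] {T : Multiset G}
    (hT : T.IsProductOneFree) : Multiset.card T < DavenportG G :=
  davenportG_mem.2 T hT

theorem exists_isProductOneFree_davenportG_le_card_add_one :
    ∃ T : Multiset G, T.IsProductOneFree ∧ DavenportG G ≤ Multiset.card T + 1 := by
  by_cases hsmall : DavenportG G ≤ 1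
  · exact ⟨0, fun S hS hS0 => absurd (Multiset.le_zero.mp hS) hS0, by simpa using hsmall⟩
  · rw [davenportG_eq_sInf] at hsmall ⊢
    have hnotMem := Nat.notMem_of_lt_sInf (Nat.sub_one_lt_of_lt (lt_of_not_ge hsmall))
    simp only [Set.mem_ofPred_eq, not_and, not_forall, not_lt] at hnotMem
    obtain ⟨T, hT, hcard⟩ := hnotMem (by omega)
    exact ⟨T, hT, by omega⟩

theorem exists_isProductOneFree_map_davenportG_le {f : G →* H} (hf : Function.Surjective f) :
    ∃ T : Multiset G, (T.map f).IsProductOneFree ∧ DavenportG H ≤ Multiset.card T + 1 := by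
  obtain ⟨T, hT, hcard⟩ := exists_isProductOneFree_davenportG_le_card_add_one (G := H)
  refine ⟨T.map (Function.surjInv hf), ?_, by simpa using hcard⟩
  rwa [Multiset.map_map, Function.comp_def, funext (Function.surjInv_eq hf), Multiset.map_id']

theorem davenportG_le_of_surjective [Finite G] {f : G →* H} (hf : Function.Surjective f) :
    DavenportG H ≤ DavenportG G := by
  obtain ⟨T, hT, hcard⟩ := exists_isProductOneFree_map_davenportG_le hf
  have := (hT.of_map f).card_lt_davenportG
  omega

theorem davenportG_lt_of_surjective [Finite G] {f : G →* H} (hf : Function.Surjective f)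
    (hker : f.ker ≠ ⊥) : DavenportG H < DavenportG G := by
  classical
  obtain ⟨T, hT, hcard⟩ := exists_isProductOneFree_map_davenportG_le hf
  obtain ⟨g, hg, hg1⟩ := f.ker.bot_or_exists_ne_one.resolve_left hker
  have := (hT.cons_of_mem_ker f hg hg1).card_lt_davenportG
  rw [Multiset.card_cons] at this
  omega

theorem davenportG_quotient_lt_of_lt [Finite G] {N K : Subgroup G} (hNK : N < K) :
    DavenportG (G ⧸ K) < DavenportG (G ⧸ N) := by
  obtain ⟨x, hxK, hxN⟩ := SetLike.exists_of_lt hNK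
  refine davenportG_lt_of_surjective (f := QuotientGroup.map N K (MonoidHom.id G) hNK.le)
    (QuotientGroup.map_surjective_of_surjective N K (MonoidHom.id G)
      QuotientGroup.mk_surjective hNK.le)
    fun hbot => hxN ?_
  have hx : (x : G ⧸ N) ∈ (QuotientGroup.map N K (MonoidHom.id G) hNK.le).ker :=
    (QuotientGroup.eq_one_iff x).mpr hxK
  rwa [hbot, Subgroup.mem_bot, QuotientGroup.eq_one_iff] at hx

theorem davenportG_quotient_add_le_of_chain [Finite G] (K : ℕ → Subgroup G) :
    ∀ t : ℕ, (∀ i, i < t → K i < K (i + 1)) →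
      DavenportG (G ⧸ K t) + t ≤ DavenportG (G ⧸ K 0)
  | 0, _ => le_rfl
  | t + 1, hchain => by
    have hstep := davenportG_quotient_lt_of_lt (hchain t t.lt_add_one)
    have ih := davenportG_quotient_add_le_of_chain K t fun i hi => hchain i (by omega)
    omega

end Davenport

theorem davenport_quotient_chain_le_general {G : Type*} [CommGroup G] [Finite G]
    (t : ℕ) (K : ℕ → Subgroup G)
    (hchain : ∀ i, i < t → K i < K (i + 1)) :
    DavenportG (G ⧸ K t) + t ≤ DavenportG G :=
  (davenportG_quotient_add_le_of_chain K t hchain).trans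
    (davenportG_le_of_surjective (QuotientGroup.mk'_surjective (K 0)))

/-- If `K 0 < K 1 < ⋯ < K t` is a strictly increasing chain of subgroups of a finite
abelian group `G` with `K 0` trivial, then `D(G / K t) ≤ D(G) − t`. -/
theorem davenport_quotient_chain_le {G : Type*} [CommGroup G] [Finite G]
    (t : ℕ) (K : ℕ → Subgroup G) (hK0 : K 0 = ⊥)
    (hchain : ∀ i, i < t → K i < K (i + 1)) :
    DavenportG (G ⧸ K t) + t ≤ DavenportG G :=
  davenport_quotient_chain_le_general t K hchain
end

section
/- Let F_q be a finite field, f a nonconstant monic polynomial in F_q[x], and R = F_q[x]/(f). For a, b ∈ R with representing polynomials θ_a, θ_b ∈ F_q[x], the following are equivalent: a H b in the Green's congruence of the multiplicative monoid of R, if and only if gcd(θ_a, f) = gcd(θ_b, f) in F_q[x]. -/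
/-! In a Bézout domain `R`, the class of `b` divides the class of `a` in `R/(f)` exactly when
`a` lies in the ideal `(b, f) = (gcd b f)`. Hence `a H b` in `R/(f)` says that `gcd b f ∣ a`
and `gcd a f ∣ b`, i.e. that the two gcds divide each other; being normalized, they are equal. -/

open Polynomial

/-- Green's preorder on the multiplicative monoid of a commutative ring:
`a ≤_H b` iff `a = b` or `a = b * c` for some `c`. -/
def GreenLe {S : Type*} [CommMonoid S] (a b : S) : Prop :=
  a = b ∨ ∃ c : S, a = b * c

/-- Green's congruence: `a H b` iff `a ≤_H b` and `b ≤_H a`. -/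
def GreenEq {S : Type*} [CommMonoid S] (a b : S) : Prop :=
  GreenLe a b ∧ GreenLe b a

theorem greenLe_iff_dvd {S : Type*} [CommMonoid S] {a b : S} : GreenLe a b ↔ b ∣ a := by
  constructor
  · rintro (rfl | ⟨c, rfl⟩)
    exacts [dvd_rfl, dvd_mul_right b c]
  · rintro ⟨c, rfl⟩
    exact Or.inr ⟨c, rfl⟩

theorem greenEq_iff_dvd_and_dvd {S : Type*} [CommMonoid S] {a b : S} :
    GreenEq a b ↔ b ∣ a ∧ a ∣ b := by
  rw [GreenEq, greenLe_iff_dvd, greenLe_iff_dvd]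

theorem Ideal.Quotient.mk_dvd_mk_iff_mem_span_pair {R : Type*} [CommRing R] {f a b : R} :
    Ideal.Quotient.mk (Ideal.span {f}) b ∣ Ideal.Quotient.mk (Ideal.span {f}) a ↔
      a ∈ Ideal.span {b, f} := by
  simp only [Ideal.Quotient.mk_surjective.exists, dvd_def, ← map_mul, Ideal.Quotient.eq,
    Ideal.mem_span_singleton', Ideal.mem_span_pair]
  constructor
  · rintro ⟨c, d, hd⟩
    exact ⟨c, d, by linear_combination hd⟩
  · rintro ⟨c, d, rfl⟩
    exact ⟨c, d, by ring⟩

theorem Ideal.Quotient.mk_dvd_mk_iff_gcd_dvd {R : Type*} [CommRing R] [IsDomain R] [IsBezout R]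
    [GCDMonoid R] {f a b : R} :
    Ideal.Quotient.mk (Ideal.span {f}) b ∣ Ideal.Quotient.mk (Ideal.span {f}) a ↔
      gcd b f ∣ a := by
  rw [mk_dvd_mk_iff_mem_span_pair, ← span_gcd, Ideal.mem_span_singleton]

theorem gcd_eq_gcd_iff_gcd_dvd_and_gcd_dvd {α : Type*} [CommMonoidWithZero α] [NormalizedGCDMonoid α]
    {a b f : α} : gcd a f = gcd b f ↔ gcd b f ∣ a ∧ gcd a f ∣ b := by
  constructor
  · intro h
    exact ⟨h ▸ gcd_dvd_left a f, h ▸ gcd_dvd_left b f⟩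
  · rintro ⟨hba, hab⟩
    exact dvd_antisymm_of_normalize_eq (normalize_gcd _ _) (normalize_gcd _ _)
      (dvd_gcd hab (gcd_dvd_right a f)) (dvd_gcd hba (gcd_dvd_right b f))

theorem greenEq_iff_gcd_eq_general {F : Type*} [Field F] [DecidableEq F]
    (f : Polynomial F)
    (a b : Polynomial F ⧸ Ideal.span {f}) (θa θb : Polynomial F)
    (ha : Ideal.Quotient.mk (Ideal.span {f}) θa = a)
    (hb : Ideal.Quotient.mk (Ideal.span {f}) θb = b) :
    GreenEq a b ↔ gcd θa f = gcd θb f := by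
  subst ha hb
  rw [greenEq_iff_dvd_and_dvd, Ideal.Quotient.mk_dvd_mk_iff_gcd_dvd,
    Ideal.Quotient.mk_dvd_mk_iff_gcd_dvd, gcd_eq_gcd_iff_gcd_dvd_and_gcd_dvd]

/-- Let `F` be a finite field, `f` a nonconstant monic polynomial over `F`, and
`R = F[x]/(f)`.  For `a, b ∈ R` with representing polynomials `θa, θb`, one has `a H b`
in the Green's congruence of the multiplicative monoid of `R` if and only if the (monic)
gcds `gcd(θa, f)` and `gcd(θb, f)` coincide. -/
theorem greenEq_iff_gcd_eq {F : Type*} [Field F] [Fintype F] [DecidableEq F]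
    (f : Polynomial F) (hmonic : f.Monic) (hdeg : 0 < f.degree)
    (a b : Polynomial F ⧸ Ideal.span {f}) (θa θb : Polynomial F)
    (ha : Ideal.Quotient.mk (Ideal.span {f}) θa = a)
    (hb : Ideal.Quotient.mk (Ideal.span {f}) θb = b) :
    GreenEq a b ↔ gcd θa f = gcd θb f :=
  greenEq_iff_gcd_eq_general f a b θa θb ha hb
end

section
/- Let F be a field, let f ∈ F[x] be a nonconstant monic polynomial, let p ∈ F[x] be a monic irreducible polynomial and m ≥ 1 an integer with p^m dividing f, and set h = f / p^m. Then for any ξ ∈ F with ξ ≠ 0 and ξ ≠ 1, at least one of the following holds: gcd(h + 1, f) = 1 or gcd(ξ·h + 1, f) = 1. -/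
/-!
Over a PID a non-unit common factor of `g * h + 1` and `p ^ m * h` cannot meet `h`, so it is
forced to be the irreducible `p`. If both `h + 1` and `ξ * h + 1` failed to be coprime to `f`,
then `p` would divide `ξ * (h + 1) - (ξ * h + 1) = ξ - 1`, a unit.
-/

open Polynomial

section CommRing

variable {R : Type*} [CommRing R]

theorem isCoprime_mul_add_one_self (g h : R) : IsCoprime (g * h + 1) h :=
  ⟨1, -g, by ring⟩

theorem IsCoprime.mul_add_one_pow_mul {g h q : R} (hq : IsCoprime (g * h + 1) q) (m : ℕ) :
    IsCoprime (g * h + 1) (q ^ m * h) :=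
  hq.pow_right.mul_right (isCoprime_mul_add_one_self g h)

theorem dvd_sub_one_of_dvd_add_one_of_dvd_mul_add_one {x h c : R} (h₁ : x ∣ h + 1)
    (hc : x ∣ c * h + 1) : x ∣ c - 1 := by
  have hsub : x ∣ c * (h + 1) - (c * h + 1) := dvd_sub (h₁.mul_left c) hc
  rwa [show c * (h + 1) - (c * h + 1) = c - 1 by ring] at hsub

end CommRing

theorem Irreducible.dvd_mul_add_one_of_not_isCoprime_pow_mul {R : Type*} [CommRing R]
    [IsBezout R] {p g h : R} (hp : Irreducible p) (m : ℕ)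
    (hg : ¬IsCoprime (g * h + 1) (p ^ m * h)) : p ∣ g * h + 1 :=
  (dvd_or_isCoprime p _ hp).resolve_right fun hcop => hg (hcop.symm.mul_add_one_pow_mul m)

theorem coprime_h_add_one_or_coprime_xi_h_add_one_general {F : Type*} [Field F]
    (f p h : Polynomial F)
    (hpirr : Irreducible p)
    (m : ℕ) (hfh : f = p ^ m * h)
    (ξ : F) (hξ1 : ξ ≠ 1) :
    IsCoprime (h + 1) f ∨ IsCoprime (C ξ * h + 1) f := by
  subst hfh
  by_contra! ⟨h₁, hξ⟩
  have hp₁ : p ∣ h + 1 := by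
    simpa using hpirr.dvd_mul_add_one_of_not_isCoprime_pow_mul (g := 1) m (by simpa using h₁)
  have hpξ : p ∣ C ξ * h + 1 := hpirr.dvd_mul_add_one_of_not_isCoprime_pow_mul m hξ
  have hpC : p ∣ C (ξ - 1) := by
    simpa using dvd_sub_one_of_dvd_add_one_of_dvd_mul_add_one hp₁ hpξ
  exact hpirr.not_isUnit (isUnit_of_dvd_unit hpC (isUnit_C.2 (sub_ne_zero.2 hξ1).isUnit))

/-- Let `F` be a field, `f` a nonconstant monic polynomial, `p` a monic irreducible
polynomial, `m ≥ 1` with `p^m ∣ f`, and `h = f / p^m` (i.e. `f = p^m * h`).  Then for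
any `ξ ∈ F` with `ξ ≠ 0` and `ξ ≠ 1`, either `gcd(h + 1, f) = 1` or
`gcd(ξ·h + 1, f) = 1` (i.e. one of the two is coprime to `f`). -/
theorem coprime_h_add_one_or_coprime_xi_h_add_one {F : Type*} [Field F]
    (f p h : Polynomial F) (hmonic : f.Monic) (hdeg : 0 < f.degree)
    (hpmonic : p.Monic) (hpirr : Irreducible p)
    (m : ℕ) (hm : 1 ≤ m) (hfh : f = p ^ m * h)
    (ξ : F) (hξ0 : ξ ≠ 0) (hξ1 : ξ ≠ 1) :
    IsCoprime (h + 1) f ∨ IsCoprime (C ξ * h + 1) f :=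
  coprime_h_add_one_or_coprime_xi_h_add_one_general f p h hpirr m hfh ξ hξ1
end

section
/- Let F_q be a finite field, f a nonconstant monic polynomial in F_q[x] with irreducible factorization f = f_1^{n_1} ⋯ f_r^{n_r} into pairwise non-associate monic irreducibles, and R = F_q[x]/(f). Let c, a ∈ R with representing polynomials θ_c, θ_a ∈ F_q[x], and suppose that for every index i ∈ [1, r], either f_i^{n_i} divides θ_c, or f_i does not divide θ_a. Then there exists a unit u of R such that c·u = c·a in R. -/
/-!
Let `S` be the set of `i` with `fᵢ ∣ θa`, and split `f = g * h` with
`g = ∏_{i ∈ S} fᵢ^{nᵢ}`.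
The hypothesis gives `g ∣ θc`, so `θc * h ≡ 0 (mod f)` and `c * (θa + h) = c * a`.
No `fᵢ` divides `θa + h`, because it divides exactly one of the two summands;
hence `θa + h` is coprime to `f` and its class is the required unit.
-/

theorem Ideal.Quotient.isUnit_mk_of_isCoprime {R : Type*} [CommRing R] {x f : R}
    (h : IsCoprime x f) : IsUnit (Ideal.Quotient.mk (Ideal.span {f}) x) :=
  isCoprime_zero_right.1 <| by
    simpa [Ideal.Quotient.mk_singleton_self] using h.map (Ideal.Quotient.mk (Ideal.span {f}))

theorem exists_unit_mul_mk_eq_of_isCoprime {R : Type*} [CommRing R] {f g h c a : R}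
    (hfgh : f = g * h) (hgc : g ∣ c) (hcop : IsCoprime (a + h) f) :
    ∃ u : (R ⧸ Ideal.span {f})ˣ,
      Ideal.Quotient.mk _ c * (u : R ⧸ Ideal.span {f}) =
        Ideal.Quotient.mk _ c * Ideal.Quotient.mk _ a := by
  obtain ⟨u, hu⟩ := Ideal.Quotient.isUnit_mk_of_isCoprime hcop
  have hch : Ideal.Quotient.mk (Ideal.span {f}) c * Ideal.Quotient.mk _ h = 0 := by
    rw [← map_mul, Ideal.Quotient.eq_zero_iff_dvd, hfgh]
    exact mul_dvd_mul_right hgc h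
  exact ⟨u, by rw [hu, map_add, mul_add, hch, add_zero]⟩

section PairwiseNonassociated

variable {R ι : Type*} [CommRing R] [IsBezout R] {p : ι → R}
  (hp : ∀ i, Irreducible (p i)) (hpa : Pairwise fun i j => ¬Associated (p i) (p j))
include hp hpa

theorem isCoprime_pow_of_ne {i j : ι} (hij : i ≠ j) (a b : ℕ) :
    IsCoprime (p i ^ a) (p j ^ b) :=
  ((hp i).coprime_iff_not_dvd.2 fun h => hpa hij ((hp i).associated_of_dvd (hp j) h)).pow

theorem not_dvd_prod_pow_of_notMem {i : ι} {T : Finset ι} (hi : i ∉ T) (n : ι → ℕ) :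
    ¬p i ∣ ∏ j ∈ T, p j ^ n j :=
  (hp i).coprime_iff_not_dvd.1 <| IsCoprime.prod_right fun j hj => by
    simpa using isCoprime_pow_of_ne hp hpa (ne_of_mem_of_not_mem hj hi).symm 1 (n j)

theorem prod_pow_dvd_of_forall {T : Finset ι} {n : ι → ℕ} {x : R}
    (h : ∀ i ∈ T, p i ^ n i ∣ x) : ∏ i ∈ T, p i ^ n i ∣ x :=
  Finset.prod_dvd_of_coprime (fun _ _ _ _ hij => isCoprime_pow_of_ne hp hpa hij _ _) h

theorem isCoprime_add_prod_pow_filter_not_dvd [Fintype ι] {n : ι → ℕ} (hn : ∀ i, n i ≠ 0)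
    (x : R) [DecidablePred fun i => p i ∣ x] :
    IsCoprime (x + ∏ i ∈ Finset.univ.filter (fun i => ¬p i ∣ x), p i ^ n i)
      (∏ i, p i ^ n i) := by
  refine IsCoprime.prod_right fun i _ => (hp i).coprime_pow_of_not_dvd (n i) ?_
  by_cases hx : p i ∣ x
  · rw [dvd_add_right hx]
    exact not_dvd_prod_pow_of_notMem hp hpa (by simp [hx]) n
  · have hdvd : p i ∣ ∏ i ∈ Finset.univ.filter (fun i => ¬p i ∣ x), p i ^ n i :=
      (dvd_pow_self _ (hn i)).trans (Finset.dvd_prod_of_mem _ (by simp [hx]))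
    rwa [dvd_add_left hdvd]

end PairwiseNonassociated

theorem exists_unit_mul_eq_general {F : Type*} [Field F]
    (r : ℕ) (fi : Fin r → Polynomial F) (n : Fin r → ℕ)
    (hirr : ∀ i, Irreducible (fi i))
    (hn : ∀ i, 1 ≤ n i)
    (hnonassoc : ∀ i j, i ≠ j → ¬ Associated (fi i) (fi j))
    (f : Polynomial F) (hf : f = ∏ i, fi i ^ n i)
    (c a : Polynomial F ⧸ Ideal.span {f}) (θc θa : Polynomial F)
    (hc : Ideal.Quotient.mk (Ideal.span {f}) θc = c)
    (ha : Ideal.Quotient.mk (Ideal.span {f}) θa = a)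
    (hyp : ∀ i, (fi i) ^ (n i) ∣ θc ∨ ¬ (fi i ∣ θa)) :
    ∃ u : (Polynomial F ⧸ Ideal.span {f})ˣ,
      c * (u : Polynomial F ⧸ Ideal.span {f}) = c * a := by
  classical
  subst hf hc ha
  have hn0 : ∀ i, n i ≠ 0 := fun i => Nat.one_le_iff_ne_zero.1 (hn i)
  have hsplit := Finset.prod_filter_mul_prod_filter_not Finset.univ (fun i => fi i ∣ θa)
    (fun i => fi i ^ n i)
  refine exists_unit_mul_mk_eq_of_isCoprime hsplit.symm ?_
    (isCoprime_add_prod_pow_filter_not_dvd hirr hnonassoc hn0 θa)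
  exact prod_pow_dvd_of_forall hirr hnonassoc fun i hi =>
    (hyp i).resolve_right (not_not_intro (Finset.mem_filter.1 hi).2)

/-- Let `F` be a finite field and `f = f₁^{n₁} ⋯ f_r^{n_r}` a nonconstant monic
polynomial over `F`, factored into powers of pairwise non-associate monic irreducible
polynomials, and let `R = F[x]/(f)`.  Let `c, a ∈ R` have representatives `θc, θa`, and
suppose that for each `i` either `fᵢ^{nᵢ} ∣ θc` or `fᵢ ∤ θa`.  Then there is a unit `u`
of `R` with `c·u = c·a`. -/
theorem exists_unit_mul_eq {F : Type*} [Field F] [Fintype F]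
    (r : ℕ) (fi : Fin r → Polynomial F) (n : Fin r → ℕ)
    (hmon : ∀ i, (fi i).Monic) (hirr : ∀ i, Irreducible (fi i))
    (hn : ∀ i, 1 ≤ n i)
    (hnonassoc : ∀ i j, i ≠ j → ¬ Associated (fi i) (fi j))
    (f : Polynomial F) (hf : f = ∏ i, fi i ^ n i) (hdeg : 0 < f.degree)
    (c a : Polynomial F ⧸ Ideal.span {f}) (θc θa : Polynomial F)
    (hc : Ideal.Quotient.mk (Ideal.span {f}) θc = c)
    (ha : Ideal.Quotient.mk (Ideal.span {f}) θa = a)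
    (hyp : ∀ i, (fi i) ^ (n i) ∣ θc ∨ ¬ (fi i ∣ θa)) :
    ∃ u : (Polynomial F ⧸ Ideal.span {f})ˣ,
      c * (u : Polynomial F ⧸ Ideal.span {f}) = c * a :=
  exists_unit_mul_eq_general r fi n hirr hn hnonassoc f hf c a θc θa hc ha hyp
end

section
/- Let F_2 be the field with two elements, and let f = x·(x+1)·g ∈ F_2[x] where g ∈ F_2[x] satisfies gcd(x·(x+1), g) = 1. Let R = F_2[x]/(f). Then D(S_R) ≥ D(U(S_R)) + 2, where S_R is the multiplicative semigroup of R and U(S_R) its group of units. -/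
/-!
Write `R = F₂[X]/(X(X+1)g)`. Evaluation at `0` and at `1` are ring homomorphisms `R → F₂`,
and they send every unit to `1`. By the Chinese remainder theorem there are `a, b ∈ R` with
`a(0) = 0`, `a(1) = 1`, `b(0) = 1`, `b(1) = 0` and `a ≡ b ≡ 1 mod g`. If `S` is an irreducible
sequence of units of length `D(Rˣ) - 1`, then `a b S` is irreducible in `R`: a subsequence
with the same product must contain `a` (evaluate at `0`) and `b` (evaluate at `1`), and units
act freely on `ab`, since `ab w = ab` makes `w - 1` a multiple of `X(X+1)` annihilated by `ab`,
while `ab ≡ 1 mod g`. Cancelling `ab`, the units left in the subsequence have the product of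
`S`, so they are all of `S`. Hence `D(R) ≥ |S| + 3 = D(Rˣ) + 2`.
-/

open Polynomial

/-- A sequence (finite multiset) `T` over a commutative semigroup with identity is
reducible if it has a proper subsequence whose product equals the product of `T`. -/
def MulReducible {M : Type*} [CommMonoid M] (T : Multiset M) : Prop :=
  ∃ T' : Multiset M, T' ≤ T ∧ T' ≠ T ∧ T'.prod = T.prod

/-- The Davenport constant of a commutative semigroup with identity: the least positive
integer `ℓ` such that every sequence of length at least `ℓ` is reducible. -/
noncomputable def Davenport (M : Type*) [CommMonoid M] : ℕ :=
  sInf {n : ℕ | 1 ≤ n ∧ ∀ T : Multiset M, n ≤ Multiset.card T → MulReducible T}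

section Davenport

variable {M : Type*} [CommMonoid M]

theorem not_mulReducible_zero : ¬ MulReducible (0 : Multiset M) := by
  rintro ⟨T', hle, hne, -⟩
  exact hne (Multiset.le_zero.1 hle)

theorem mulReducible_of_prod_take_eq {l : List M} {i j : ℕ} (hij : i < j) (hj : j ≤ l.length)
    (hprod : (l.take i).prod = (l.take j).prod) : MulReducible (l : Multiset M) := by
  refine ⟨↑(l.take i ++ l.drop j), ?_, ?_, ?_⟩
  · rw [Multiset.coe_le]
    conv_rhs => rw [← List.take_append_drop j l]
    exact ((List.take_sublist_take_left hij.le).append_right _).subperm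
  · intro h
    have := congrArg Multiset.card h
    simp only [Multiset.coe_card, List.length_append, List.length_take, List.length_drop] at this
    omega
  · rw [Multiset.prod_coe, Multiset.prod_coe, List.prod_append, hprod, ← List.prod_append,
      List.take_append_drop]

theorem mulReducible_of_card_lt [Fintype M] {T : Multiset M} (hT : Fintype.card M < T.card) :
    MulReducible T := by
  induction T using Quotient.inductionOn with | h l => ?_
  rw [Multiset.quot_mk_to_coe, Multiset.coe_card] at hT
  obtain ⟨i, j, hne, hij⟩ := Fintype.exists_ne_map_eq_of_card_lt
    (fun i : Fin (l.length + 1) => (l.take i).prod) (by simp only [Fintype.card_fin]; omega)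
  rcases hne.lt_or_gt with h | h
  · exact mulReducible_of_prod_take_eq h (by omega) hij
  · exact mulReducible_of_prod_take_eq h (by omega) hij.symm

theorem davenport_set_nonempty [Finite M] :
    {n : ℕ | 1 ≤ n ∧ ∀ T : Multiset M, n ≤ T.card → MulReducible T}.Nonempty := by
  cases nonempty_fintype M
  exact ⟨Fintype.card M + 1, by omega, fun _ hT => mulReducible_of_card_lt hT⟩

theorem card_lt_davenport [Finite M] {T : Multiset M} (hT : ¬ MulReducible T) :
    T.card < Davenport M :=
  le_csInf davenport_set_nonempty fun _ ⟨_, hn⟩ => not_le.1 fun h => hT (hn T h)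

variable (M) in
theorem exists_not_mulReducible_davenport_le_card_add_one :
    ∃ S : Multiset M, ¬ MulReducible S ∧ Davenport M ≤ S.card + 1 := by
  by_cases h : Davenport M ≤ 1
  · exact ⟨0, not_mulReducible_zero, by simpa using h⟩
  have hnot := Nat.notMem_of_lt_sInf (show Davenport M - 1 < Davenport M by omega)
  simp only [Set.mem_ofPred_eq, not_and, not_forall] at hnot
  obtain ⟨T, hT, hirr⟩ := hnot (by omega)
  exact ⟨T, hirr, by omega⟩

end Davenport

section Extension

variable {M : Type*} [CommMonoid M]

theorem not_mulReducible_add_map_units {C : Multiset M} {S : Multiset Mˣ}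
    (hS : ¬ MulReducible S) (hfree : ∀ u : Mˣ, C.prod * u = C.prod → u = 1)
    (hC : ∀ T' ≤ C + S.map ((↑) : Mˣ → M),
      T'.prod = (C + S.map ((↑) : Mˣ → M)).prod → C ≤ T') :
    ¬ MulReducible (C + S.map ((↑) : Mˣ → M)) := by
  rintro ⟨T', hle, hne, hprod⟩
  obtain ⟨T₂, rfl⟩ := Multiset.le_iff_exists_add.1 (hC T' hle hprod)
  rw [Multiset.add_le_add_iff_left] at hle
  lift T₂ to Multiset Mˣ using fun x hx => by
    obtain ⟨u, -, rfl⟩ := Multiset.mem_map.1 (Multiset.mem_of_le hle hx)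
    exact u.isUnit
  rw [Multiset.map_le_map_iff Units.val_injective] at hle
  have hcoe (U : Multiset Mˣ) : (U.map ((↑) : Mˣ → M)).prod = U.prod :=
    (map_multiset_prod (Units.coeHom M) U).symm
  rw [Multiset.prod_add, Multiset.prod_add, hcoe, hcoe] at hprod
  have hT₂ : T₂.prod = S.prod := by
    refine mul_inv_eq_one.1 (hfree _ ?_)
    rw [Units.val_mul, ← mul_assoc, hprod, Units.mul_inv_cancel_right]
  obtain rfl : T₂ = S := by_contra fun h => hS ⟨T₂, hle, h, hT₂⟩
  exact hne rfl

end Extension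

section Separation

variable {M M₀ : Type*} [CommMonoid M] [CommMonoidWithZero M₀] [NoZeroDivisors M₀]
  [Nontrivial M₀]

theorem mem_of_le_of_prod_eq (φ : M →* M₀) {a : M} {T T' : Multiset M} (ha : a ∈ T)
    (hφa : φ a = 0) (hφT : ∀ x ∈ T, φ x = 0 → x = a) (hle : T' ≤ T)
    (hprod : T'.prod = T.prod) :
    a ∈ T' := by
  have hzero : φ T'.prod = 0 := by
    rw [hprod, map_multiset_prod, Multiset.prod_eq_zero_iff]
    exact hφa ▸ Multiset.mem_map_of_mem φ ha
  rw [map_multiset_prod, Multiset.prod_eq_zero_iff, Multiset.mem_map] at hzero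
  obtain ⟨x, hx, hφx⟩ := hzero
  exact hφT x (Multiset.mem_of_le hle hx) hφx ▸ hx

theorem not_mulReducible_pair_add_map_units (φ ψ : M →* M₀) {a b : M} (hφa : φ a = 0)
    (hψa : ψ a ≠ 0) (hφb : φ b ≠ 0) (hψb : ψ b = 0)
    (hfree : ∀ u : Mˣ, a * b * u = a * b → u = 1) {S : Multiset Mˣ} (hS : ¬ MulReducible S) :
    ¬ MulReducible ({a, b} + S.map ((↑) : Mˣ → M)) := by
  have hab : a ≠ b := fun h => hφb (h ▸ hφa)
  have hmem (y : M) (hy : y ∈ ({a, b} + S.map ((↑) : Mˣ → M))) :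
      y = a ∨ y = b ∨ IsUnit y := by
    simp only [Multiset.insert_eq_cons, Multiset.cons_add, Multiset.singleton_add,
      Multiset.mem_cons, Multiset.mem_map] at hy
    rcases hy with rfl | rfl | ⟨u, -, rfl⟩ <;> simp
  refine not_mulReducible_add_map_units hS (by simpa using hfree) fun T' hle hprod => ?_
  rw [Multiset.le_iff_subset (by simp [hab])]
  intro x hx
  simp only [Multiset.insert_eq_cons, Multiset.mem_cons, Multiset.mem_singleton] at hx
  rcases hx with rfl | rfl
  · refine mem_of_le_of_prod_eq φ (by simp) hφa (fun y hy hφy => ?_) hle hprod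
    rcases hmem y hy with rfl | rfl | hy
    · rfl
    · exact absurd hφy hφb
    · exact absurd hφy (hy.map φ).ne_zero
  · refine mem_of_le_of_prod_eq ψ (by simp) hψb (fun y hy hψy => ?_) hle hprod
    rcases hmem y hy with rfl | rfl | hy
    · exact absurd hψy hψa
    · rfl
    · exact absurd hψy (hy.map ψ).ne_zero

end Separation

theorem eq_one_of_mul_eq_self {R : Type*} [CommRing R] {p q c w : R} (hpq : p * q = 0)
    (hc : q ∣ c - 1) (hw : p ∣ w - 1) (h : c * w = c) : w = 1 := by
  -- `w - 1 = c (w - 1) - (c - 1) (w - 1)`, and `(c - 1) (w - 1)` is a multiple of `p q`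
  obtain ⟨k, hk⟩ := hc
  obtain ⟨m, hm⟩ := hw
  linear_combination h - (w - 1) * hk - q * k * hm - k * m * hpq

theorem exists_dvd_and_dvd_sub_one {R : Type*} [CommRing R] {p q : R} (h : IsCoprime p q) :
    ∃ a, p ∣ a ∧ q ∣ a - 1 := by
  obtain ⟨u, v, huv⟩ := h
  exact ⟨u * p, dvd_mul_left p u, -v, by linear_combination huv⟩

theorem X_dvd_iff_isRoot_zero {R : Type*} [CommRing R] {p : R[X]} : X ∣ p ↔ p.IsRoot 0 := by
  simpa using dvd_iff_isRoot (a := (0 : R)) (p := p)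

theorem CharTwo.X_add_one_dvd_iff_isRoot_one {R : Type*} [CommRing R] [CharP R 2] {p : R[X]} :
    X + 1 ∣ p ↔ p.IsRoot 1 := by
  rw [← dvd_iff_isRoot, C_1, CharTwo.sub_eq_add]

theorem isCoprime_X_X_add_one {R : Type*} [CommRing R] : IsCoprime (X : R[X]) (X + 1) :=
  ⟨-1, 1, by ring⟩

theorem X_mul_X_add_one_dvd_sub_one {p : (ZMod 2)[X]} (h₀ : ¬ p.IsRoot 0)
    (h₁ : ¬ p.IsRoot 1) :
    X * (X + 1) ∣ p - 1 := by
  have hsub (r : ZMod 2) (hr : ¬ p.IsRoot r) : (p - 1).IsRoot r := by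
    have hp : p.eval r = 1 := Fin.eq_one_of_ne_zero _ hr
    simp [hp]
  exact isCoprime_X_X_add_one.mul_dvd (X_dvd_iff_isRoot_zero.2 (hsub 0 h₀))
    (CharTwo.X_add_one_dvd_iff_isRoot_one.2 (hsub 1 h₁))

noncomputable def AdjoinRoot.evalOfIsRoot {K : Type*} [CommRing K] {f : K[X]} {r : K}
    (hr : f.IsRoot r) : AdjoinRoot f →+* K :=
  AdjoinRoot.lift (RingHom.id K) r hr

@[simp]
theorem AdjoinRoot.evalOfIsRoot_mk {K : Type*} [CommRing K] {f : K[X]} {r : K}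
    (hr : f.IsRoot r) (p : K[X]) : AdjoinRoot.evalOfIsRoot hr (AdjoinRoot.mk f p) = p.eval r :=
  AdjoinRoot.lift_mk _ p

theorem AdjoinRoot.finite_of_ne_zero {K : Type*} [Field K] [Finite K] {f : K[X]} (hf : f ≠ 0) :
    Finite (AdjoinRoot f) :=
  have := (AdjoinRoot.powerBasis hf).finite
  Module.finite_of_finite K

theorem isRoot_X_mul_X_add_one_mul (g : (ZMod 2)[X]) (r : ZMod 2) :
    (X * (X + 1) * g).IsRoot r := by
  have hr : r * (r + 1) = 0 := by revert r; decide
  simp [hr]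

section Quotient

variable {g : (ZMod 2)[X]}

theorem mk_X_mul_X_add_one_dvd_unit_sub_one (w : (AdjoinRoot (X * (X + 1) * g))ˣ) :
    AdjoinRoot.mk _ (X * (X + 1)) ∣ (w : AdjoinRoot (X * (X + 1) * g)) - 1 := by
  obtain ⟨p, hp⟩ := AdjoinRoot.mk_surjective (w : AdjoinRoot (X * (X + 1) * g))
  have hroot (r : ZMod 2) : ¬ p.IsRoot r := fun hr => by
    simpa [← hp, hr.eq_zero] using
      w.isUnit.map (AdjoinRoot.evalOfIsRoot (isRoot_X_mul_X_add_one_mul g r))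
  rw [← hp, ← map_one (AdjoinRoot.mk _), ← map_sub]
  exact map_dvd _ (X_mul_X_add_one_dvd_sub_one (hroot 0) (hroot 1))

theorem exists_separating_pair (hg : IsCoprime (X * (X + 1)) g) :
    ∃ A B : (ZMod 2)[X],
      A.IsRoot 0 ∧ ¬ A.IsRoot 1 ∧ ¬ B.IsRoot 0 ∧ B.IsRoot 1 ∧ g ∣ A * B - 1 := by
  obtain ⟨A, hXA, hA⟩ :=
    exists_dvd_and_dvd_sub_one (isCoprime_X_X_add_one.mul_right hg.of_mul_left_left)
  obtain ⟨B, hXB, hB⟩ :=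
    exists_dvd_and_dvd_sub_one (isCoprime_X_X_add_one.symm.mul_right hg.of_mul_left_right)
  have not_isRoot {p : (ZMod 2)[X]} {r : ZMod 2} (h : (p - 1).IsRoot r) : ¬ p.IsRoot r := by
    simp_all [sub_eq_zero]
  refine ⟨A, B, X_dvd_iff_isRoot_zero.1 hXA,
    not_isRoot (CharTwo.X_add_one_dvd_iff_isRoot_one.1 (dvd_of_mul_right_dvd hA)),
    not_isRoot (X_dvd_iff_isRoot_zero.1 (dvd_of_mul_right_dvd hB)),
    CharTwo.X_add_one_dvd_iff_isRoot_one.1 hXB, ?_⟩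
  rw [show A * B - 1 = (A - 1) * B + (B - 1) by ring]
  exact dvd_add ((dvd_of_mul_left_dvd hA).mul_right B) (dvd_of_mul_left_dvd hB)

theorem X_mul_X_add_one_mul_ne_zero (hg : IsCoprime (X * (X + 1)) g) : X * (X + 1) * g ≠ 0 := by
  have hg₀ : g ≠ 0 := by
    rintro rfl
    exact not_isUnit_X (isUnit_of_mul_isUnit_left (isCoprime_zero_right.1 hg))
  exact mul_ne_zero (mul_ne_zero X_ne_zero (by simpa using X_add_C_ne_zero (1 : ZMod 2))) hg₀

theorem unit_eq_one_of_mul_eq_self {A B : (ZMod 2)[X]} (hAB : g ∣ A * B - 1)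
    (w : (AdjoinRoot (X * (X + 1) * g))ˣ)
    (h : AdjoinRoot.mk (X * (X + 1) * g) A * AdjoinRoot.mk _ B *
      (w : AdjoinRoot (X * (X + 1) * g)) = AdjoinRoot.mk _ A * AdjoinRoot.mk _ B) :
    w = 1 :=
  Units.val_eq_one.1 <| eq_one_of_mul_eq_self (by rw [← map_mul]; exact AdjoinRoot.mk_self)
    (by simpa using map_dvd (AdjoinRoot.mk _) hAB) (mk_X_mul_X_add_one_dvd_unit_sub_one w) h

end Quotient

/-- Let `f = x·(x+1)·g ∈ F₂[x]` with `gcd(x·(x+1), g) = 1`, and `R = F₂[x]/(f)`.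
Then `D(S_R) ≥ D(U(S_R)) + 2`. -/
theorem davenport_ge_units_add_two (g : Polynomial (ZMod 2))
    (hg : IsCoprime (X * (X + 1)) g) :
    Davenport ((Polynomial (ZMod 2) ⧸ Ideal.span {X * (X + 1) * g})ˣ) + 2 ≤
      Davenport (Polynomial (ZMod 2) ⧸ Ideal.span {X * (X + 1) * g}) := by
  change Davenport (AdjoinRoot (X * (X + 1) * g : (ZMod 2)[X]))ˣ + 2 ≤
    Davenport (AdjoinRoot (X * (X + 1) * g))
  have := AdjoinRoot.finite_of_ne_zero (X_mul_X_add_one_mul_ne_zero hg)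
  obtain ⟨A, B, hA₀, hA₁, hB₀, hB₁, hAB⟩ := exists_separating_pair hg
  obtain ⟨S, hS, hD⟩ :=
    exists_not_mulReducible_davenport_le_card_add_one (AdjoinRoot (X * (X + 1) * g))ˣ
  have hT := not_mulReducible_pair_add_map_units
    (a := AdjoinRoot.mk _ A) (b := AdjoinRoot.mk _ B)
    (AdjoinRoot.evalOfIsRoot (isRoot_X_mul_X_add_one_mul g 0) : AdjoinRoot _ →* ZMod 2)
    (AdjoinRoot.evalOfIsRoot (isRoot_X_mul_X_add_one_mul g 1))
    (by simpa using hA₀) (by simpa using hA₁) (by simpa using hB₀) (by simpa using hB₁)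
    (unit_eq_one_of_mul_eq_self hAB) hS
  have hcard := card_lt_davenport hT
  simp only [Multiset.card_add, Multiset.card_map, Multiset.insert_eq_cons, Multiset.card_cons,
    Multiset.card_singleton] at hcard
  omega
end
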